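/- (Ratio limits in the proof of Lemma 2.2.) Let (x_n, y_n)_{n≥0} be a sequence of positive pairs following the explicit SG recursion with x0 > y0 > 0. Then there exist C > 0 and δ ∈ (0, 1) such that y_n/x_n ≤ C·δ^n for all n ≥ 0, and moreover x_n/x_{n−1} → 2/3 and y_n/y_{n−1} → 1/2 as n → ∞. -/

import Mathlib

/-!
Everything is governed by the ratio `r = y/x`. By homogeneity of `N`, one step multiplies `x` by
`sgRatioX r` and `y` by `sgRatioY r`, with values `2/3` and `1/2` at `r = 0`, so the new ratio is
`r · sgRatioY r / sgRatioX r`. Squaring away the root shows that for `0 < r < 1` this factor is at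
most `(3 + 2r)/(4 + r)`, which increases with `r` and stays below `1`. Hence the ratio decays
geometrically from `r₀ < 1`, and the two ratio limits follow by continuity at `r = 0`.
-/

noncomputable section

/-- `N(x, y) = √(4x² + 6xy + 6y²)`. -/
def NSG (x y : ℝ) : ℝ := Real.sqrt (4 * x ^ 2 + 6 * x * y + 6 * y ^ 2)

/-- A sequence of positive pairs following the explicit SG recursion. -/
def FollowsSG (X Y : ℕ → ℝ) : Prop :=
  (∀ n, 0 < X n ∧ 0 < Y n) ∧
  ∀ n, X (n + 1) = (14 * X n + 3 * Y n - 2 * NSG (X n) (Y n)) / 15 ∧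
       Y (n + 1) = (-2 * X n + Y n + NSG (X n) (Y n)) / 5

open Filter Topology

theorem le_mul_pow_of_succ_le_mul {r : ℕ → ℝ} {q : ℝ} (hq₀ : 0 ≤ q) (hq₁ : q ≤ 1)
    (hr₀ : 0 ≤ r 0) (hstep : ∀ n, r n ≤ r 0 → r (n + 1) ≤ q * r n) (n : ℕ) :
    r n ≤ r 0 * q ^ n := by
  induction n with
  | zero => simp
  | succ n ih =>
    have hle : r n ≤ r 0 := ih.trans (mul_le_of_le_one_right hr₀ (pow_le_one₀ hq₀ hq₁))
    calc r (n + 1) ≤ q * r n := hstep n hle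
      _ ≤ q * (r 0 * q ^ n) := mul_le_mul_of_nonneg_left ih hq₀
      _ = r 0 * q ^ (n + 1) := by ring

def sgRoot (r : ℝ) : ℝ := √(4 + 6 * r + 6 * r ^ 2)

def sgRatioX (r : ℝ) : ℝ := (14 + 3 * r - 2 * sgRoot r) / 15

/-- The factor `(-2 + r + sgRoot r) / (5 r)` of the `y`-recursion (`sgRatioY_eq`), rationalised so
that it is continuous at `0`. -/
def sgRatioY (r : ℝ) : ℝ := (1 + 6 * (1 + r) / (sgRoot r + 2)) / 5

lemma sgRoot_nonneg (r : ℝ) : 0 ≤ sgRoot r := Real.sqrt_nonneg _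

lemma sgRoot_sq {r : ℝ} (hr : 0 ≤ r) : sgRoot r ^ 2 = 4 + 6 * r + 6 * r ^ 2 :=
  Real.sq_sqrt (by positivity)

lemma sgRoot_zero : sgRoot 0 = 2 := by
  rw [sgRoot, show (4 + 6 * 0 + 6 * 0 ^ 2 : ℝ) = 2 ^ 2 by norm_num, Real.sqrt_sq zero_le_two]

lemma sgRoot_lt_four {r : ℝ} (hr₀ : 0 ≤ r) (hr₁ : r < 1) : sgRoot r < 4 := by
  nlinarith [sgRoot_sq hr₀, sgRoot_nonneg r]

lemma NSG_eq_mul_sgRoot {x : ℝ} (y : ℝ) (hx : 0 < x) : NSG x y = x * sgRoot (y / x) := by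
  rw [NSG, sgRoot, show 4 * x ^ 2 + 6 * x * y + 6 * y ^ 2
      = x ^ 2 * (4 + 6 * (y / x) + 6 * (y / x) ^ 2) by field_simp,
    Real.sqrt_mul (sq_nonneg x), Real.sqrt_sq hx.le]

lemma sgRatioY_eq {r : ℝ} (hr : 0 < r) : sgRatioY r = (-2 + r + sgRoot r) / (5 * r) := by
  have hs := sgRoot_sq hr.le
  have hden : 0 < sgRoot r + 2 := by linarith [sgRoot_nonneg r]
  unfold sgRatioY
  field_simp
  linear_combination -hs

lemma sgRatioX_pos {r : ℝ} (hr₀ : 0 ≤ r) (hr₁ : r < 1) : 0 < sgRatioX r := by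
  unfold sgRatioX
  linarith [sgRoot_lt_four hr₀ hr₁]

lemma sgRatioX_zero : sgRatioX 0 = 2 / 3 := by
  norm_num [sgRatioX, sgRoot_zero]

lemma sgRatioY_zero : sgRatioY 0 = 1 / 2 := by
  norm_num [sgRatioY, sgRoot_zero]

lemma continuousAt_sgRatioX : ContinuousAt sgRatioX 0 := by
  unfold sgRatioX sgRoot
  fun_prop

lemma continuousAt_sgRatioY : ContinuousAt sgRatioY 0 := by
  have hden : sgRoot 0 + 2 ≠ 0 := by norm_num [sgRoot_zero]
  unfold sgRatioY sgRoot at *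
  fun_prop (disch := exact hden)

lemma sgRatioY_mul_le {r : ℝ} (hr₀ : 0 < r) (hr₁ : r < 1) :
    (4 + r) * sgRatioY r ≤ (3 + 2 * r) * sgRatioX r := by
  set s := sgRoot r
  have hs : s ^ 2 = 4 + 6 * r + 6 * r ^ 2 := sgRoot_sq hr₀.le
  have hs₀ : 0 ≤ s := sgRoot_nonneg r
  have hroot : 18 + 37 * r + 33 * r ^ 2 + 12 * r ^ 3 ≤ s * (9 + 13 * r + 3 * r ^ 2) := by
    have hdiff : (s * (9 + 13 * r + 3 * r ^ 2)) ^ 2 - (18 + 37 * r + 33 * r ^ 2 + 12 * r ^ 3) ^ 2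
        = 45 * r * (1 - r) * (2 + 7 * r + 11 * r ^ 2 + 8 * r ^ 3 + 2 * r ^ 4) := by
      linear_combination (9 + 13 * r + 3 * r ^ 2) ^ 2 * hs
    have hpos : 0 ≤ 45 * r * (1 - r) * (2 + 7 * r + 11 * r ^ 2 + 8 * r ^ 3 + 2 * r ^ 4) := by
      have : 0 ≤ 1 - r := by linarith
      positivity
    exact (pow_le_pow_iff_left₀ (by positivity) (by positivity) two_ne_zero).1 (by linarith)
  unfold sgRatioY sgRatioX
  rw [← sub_nonneg]
  have hden : 0 < s + 2 := by positivity
  have key : (3 + 2 * r) * ((14 + 3 * r - 2 * s) / 15) - (4 + r) * ((1 + 6 * (1 + r) / (s + 2)) / 5)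
      = (2 * (s * (9 + 13 * r + 3 * r ^ 2) - (18 + 37 * r + 33 * r ^ 2 + 12 * r ^ 3)))
        / (15 * (s + 2)) := by
    field_simp
    linear_combination (-(30 + 20 * r)) * hs
  rw [key]
  apply div_nonneg <;> linarith

namespace FollowsSG

variable {X Y : ℕ → ℝ}

lemma X_succ_div (h : FollowsSG X Y) (n : ℕ) : X (n + 1) / X n = sgRatioX (Y n / X n) := by
  have hx := (h.1 n).1
  rw [(h.2 n).1, NSG_eq_mul_sgRoot _ hx, sgRatioX]
  field_simp

lemma Y_succ_div (h : FollowsSG X Y) (n : ℕ) : Y (n + 1) / Y n = sgRatioY (Y n / X n) := by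
  obtain ⟨hx, hy⟩ := h.1 n
  rw [(h.2 n).2, NSG_eq_mul_sgRoot _ hx, sgRatioY_eq (div_pos hy hx)]
  field_simp

lemma ratio_succ_le (h : FollowsSG X Y) {n : ℕ} {ρ : ℝ} (hn : Y n / X n ≤ ρ) (hρ : ρ < 1) :
    Y (n + 1) / X (n + 1) ≤ (3 + 2 * ρ) / (4 + ρ) * (Y n / X n) := by
  obtain ⟨hx, hy⟩ := h.1 n
  set r := Y n / X n with hr_def
  have hr : 0 < r := div_pos hy hx
  have hF := sgRatioX_pos hr.le (hn.trans_lt hρ)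
  have hstep : Y (n + 1) / X (n + 1) = sgRatioY r / sgRatioX r * r := by
    rw [← X_succ_div h, ← Y_succ_div h, hr_def]
    field_simp
  have hfactor : sgRatioY r / sgRatioX r ≤ (3 + 2 * r) / (4 + r) := by
    rw [div_le_div_iff₀ hF (by linarith)]
    linarith [sgRatioY_mul_le hr (hn.trans_lt hρ)]
  have hmono : (3 + 2 * r) / (4 + r) ≤ (3 + 2 * ρ) / (4 + ρ) := by
    rw [div_le_div_iff₀ (by linarith) (by linarith)]
    nlinarith
  rw [hstep]
  exact mul_le_mul_of_nonneg_right (hfactor.trans hmono) hr.le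

end FollowsSG

theorem stmt11 (X Y : ℕ → ℝ) (h : FollowsSG X Y) (h0 : Y 0 < X 0) :
    (∃ C δ : ℝ, 0 < C ∧ 0 < δ ∧ δ < 1 ∧ ∀ n, Y n / X n ≤ C * δ ^ n) ∧
    Filter.Tendsto (fun n => X (n + 1) / X n) Filter.atTop (nhds (2 / 3)) ∧
    Filter.Tendsto (fun n => Y (n + 1) / Y n) Filter.atTop (nhds (1 / 2)) := by
  set r₀ := Y 0 / X 0
  have hr₀ : 0 < r₀ := div_pos (h.1 0).2 (h.1 0).1
  have hr₀_lt : r₀ < 1 := (div_lt_one (h.1 0).1).2 h0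
  set δ := (3 + 2 * r₀) / (4 + r₀)
  have hδ : 0 < δ := by positivity
  have hδ_lt : δ < 1 := by rw [div_lt_one (by linarith)]; linarith
  have hdecay : ∀ n, Y n / X n ≤ r₀ * δ ^ n :=
    le_mul_pow_of_succ_le_mul hδ.le hδ_lt.le hr₀.le fun n hn => h.ratio_succ_le hn hr₀_lt
  have hratio : Tendsto (fun n => Y n / X n) atTop (𝓝 0) := by
    refine squeeze_zero (fun n => (div_pos (h.1 n).2 (h.1 n).1).le) hdecay ?_
    simpa using (tendsto_pow_atTop_nhds_zero_of_lt_one hδ.le hδ_lt).const_mul r₀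
  refine ⟨⟨r₀, δ, hr₀, hδ, hδ_lt, hdecay⟩, ?_, ?_⟩
  · simp_rw [h.X_succ_div, ← sgRatioX_zero]
    exact continuousAt_sgRatioX.tendsto.comp hratio
  · simp_rw [h.Y_succ_div, ← sgRatioY_zero]
    exact continuousAt_sgRatioY.tendsto.comp hratio
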